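/- arXiv:2306.15744 — 4 statements merged into one kernel-verified Lean document; each statement's English description precedes it below -/
import Mathlib

section
/- For every integer t ≥ 1 there exists a [2, A_t(t)]-size-indexing Sperner family with alphabet size at most 2t²; that is, a family of multisets (Q_m) indexed by m ∈ {2, 3, …, A_t(t)}, each Q_m having exactly m elements all drawn from {1, …, 2t²}, such that no Q_m is a sub-multiset of any other Q_{m'} with m ≠ m'. -/
/-!
Write `S(n, a, b)` for the existence of an `[a, b]`-size-indexing Sperner family over the
alphabet `{1, …, n}`. The multisets `1^(2a-m) 2^(2(m-a))` show `S(2, a, 2a)`. Suppose `S(n, β, F β)`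
for all `β ≥ 2`, and put `β₀ = 2`, `β_{j+1} = F β_j + 2`. Concatenating the families for
`β₀, …, β_k`, the `j`-th one padded with `k - j` copies of the new letter `n + 1`, gives
`S(n + 1, k + 2, F β_k)`: the padding shifts the `j`-th block to `[β_j + k - j, F β_j + k - j]`, so
consecutive blocks abut, and a member of an earlier block has more copies of `n + 1` than any later
member. With `F = A_{r+1}` this yields `S(r + 2, a, A_{r+1}(a))` by induction on `r`, because
`A_{r+2}(k + 2) = A_{r+1}^(k+1)(2) ≤ A_{r+1}(β_k)`. Taking `r = t - 1` and `a = max t 2`, the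
missing sizes `m < t` are covered by the multisets `x_m^m` with distinct fresh letters `x_m`.
-/

/-- The Ackermann-like hierarchy from the paper: `A r 1 = 2` for all `r ≥ 1`,
`A 1 t = 2 * t` for `t ≥ 2`, and `A (r+1) t = A r (A (r+1) (t-1))` for `t ≥ 2`.
(The values at `t = 0` and `r = 0` are junk values, never used for `r, t ≥ 1`.) -/
def A : ℕ → ℕ → ℕ
  | _, 0 => 0
  | _, 1 => 2
  | 0, t + 2 => 2 * (t + 2)
  | 1, t + 2 => 2 * (t + 2)
  | r + 2, t + 2 => A (r + 1) (A (r + 2) (t + 1))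

open Finset

/-- Members are only compared for `m < m'`: the reverse containment is excluded by cardinality. -/
structure IsSizeIndexingSperner (n a b : ℕ) (Q : ℕ → Multiset ℕ) : Prop where
  card_eq : ∀ m ∈ Icc a b, Multiset.card (Q m) = m
  mem_Icc : ∀ m ∈ Icc a b, ∀ x ∈ Q m, x ∈ Icc 1 n
  not_le : ∀ m ∈ Icc a b, ∀ m' ∈ Icc a b, m < m' → ¬ Q m ≤ Q m'

theorem isSizeIndexingSperner_two (a : ℕ) :
    IsSizeIndexingSperner 2 a (2 * a)
      (fun m => Multiset.replicate (2 * a - m) 1 + Multiset.replicate (2 * (m - a)) 2) where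
  card_eq m hm := by
    simp only [Finset.mem_Icc] at hm
    simp only [Multiset.card_add, Multiset.card_replicate]
    omega
  mem_Icc m _ x hx := by
    rcases Multiset.mem_add.1 hx with h | h <;> simp [Multiset.eq_of_mem_replicate h]
  not_le m _ m' hm' h hle := by
    have := Multiset.count_le_of_le 1 hle
    simp only [Finset.mem_Icc] at hm'
    simp only [Multiset.count_add, Multiset.count_replicate_self, Multiset.count_replicate,
      OfNat.ofNat_ne_one, if_false, add_zero] at this
    omega

namespace IsSizeIndexingSperner

variable {n a b : ℕ} {Q : ℕ → Multiset ℕ}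

theorem not_le_of_ne (hQ : IsSizeIndexingSperner n a b Q) {m m' : ℕ} (hm : m ∈ Icc a b)
    (hm' : m' ∈ Icc a b) (hne : m ≠ m') : ¬ Q m ≤ Q m' := by
  rcases hne.lt_or_gt with h | h
  · exact hQ.not_le m hm m' hm' h
  · intro hle
    have := Multiset.card_le_card hle
    rw [hQ.card_eq m hm, hQ.card_eq m' hm'] at this
    omega

theorem mono {n' b' : ℕ} (hQ : IsSizeIndexingSperner n a b Q) (hn : n ≤ n') (hb : b' ≤ b) :
    IsSizeIndexingSperner n' a b' Q where
  card_eq m hm := hQ.card_eq m (Icc_subset_Icc_right hb hm)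
  mem_Icc m hm x hx := Icc_subset_Icc_right hn (hQ.mem_Icc m (Icc_subset_Icc_right hb hm) x hx)
  not_le m hm m' hm' :=
    hQ.not_le m (Icc_subset_Icc_right hb hm) m' (Icc_subset_Icc_right hb hm')

theorem count_succ_eq_zero (hQ : IsSizeIndexingSperner n a b Q) {m : ℕ} (hm : m ∈ Icc a b) :
    Multiset.count (n + 1) (Q m) = 0 :=
  Multiset.count_eq_zero.2 fun h => by have := Finset.mem_Icc.1 (hQ.mem_Icc m hm _ h); omega

theorem exists_pad_append {P R : ℕ → Multiset ℕ} {s e : ℕ} (hP : IsSizeIndexingSperner n a b P)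
    (hR : IsSizeIndexingSperner (n + 1) (b + s + 1) e R)
    (hRs : ∀ m ∈ Icc (b + s + 1) e, Multiset.count (n + 1) (R m) < s) :
    ∃ Q, IsSizeIndexingSperner (n + 1) (a + s) e Q ∧
      ∀ m ∈ Icc (a + s) e, Multiset.count (n + 1) (Q m) ≤ s := by
  set Q : ℕ → Multiset ℕ :=
    fun m => if m ≤ b + s then P (m - s) + Multiset.replicate s (n + 1) else R m
  have hP' : ∀ {m}, m ∈ Icc (a + s) e → m ≤ b + s → m - s ∈ Icc a b := fun hm hb => by
    simp only [Finset.mem_Icc] at hm ⊢; omega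
  have hR' : ∀ {m}, m ∈ Icc (a + s) e → ¬ m ≤ b + s → m ∈ Icc (b + s + 1) e := fun hm hb => by
    simp only [Finset.mem_Icc] at hm ⊢; omega
  have hcount : ∀ {m}, m ∈ Icc (a + s) e → m ≤ b + s → Multiset.count (n + 1) (Q m) = s :=
    fun hm hb => by
      simp only [Q, if_pos hb, Multiset.count_add, Multiset.count_replicate_self,
        hP.count_succ_eq_zero (hP' hm hb), zero_add]
  refine ⟨Q, ⟨fun m hm => ?_, fun m hm x hx => ?_, fun m hm m' hm' hlt => ?_⟩, fun m hm => ?_⟩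
  · by_cases hb : m ≤ b + s
    · have := hP.card_eq _ (hP' hm hb)
      simp only [Finset.mem_Icc] at hm
      simp only [Q, if_pos hb, Multiset.card_add, Multiset.card_replicate, this]
      omega
    · simpa only [Q, if_neg hb] using hR.card_eq m (hR' hm hb)
  · by_cases hb : m ≤ b + s
    · simp only [Q, if_pos hb] at hx
      rcases Multiset.mem_add.1 hx with h | h
      · exact Icc_subset_Icc_right n.le_succ (hP.mem_Icc _ (hP' hm hb) x h)
      · simp [Multiset.eq_of_mem_replicate h]
    · simp only [Q, if_neg hb] at hx
      exact hR.mem_Icc m (hR' hm hb) x hx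
  · by_cases hb' : m' ≤ b + s
    · have hb : m ≤ b + s := hlt.le.trans hb'
      simp only [Q, if_pos hb, if_pos hb', add_le_add_iff_right]
      exact hP.not_le _ (hP' hm hb) _ (hP' hm' hb') (by simp only [Finset.mem_Icc] at hm; omega)
    · by_cases hb : m ≤ b + s
      · intro hle
        have := Multiset.count_le_of_le (n + 1) hle
        rw [hcount hm hb] at this
        simp only [Q, if_neg hb'] at this
        exact (hRs m' (hR' hm' hb')).not_ge this
      · simp only [Q, if_neg hb, if_neg hb']
        exact hR.not_le m (hR' hm hb) m' (hR' hm' hb') hlt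
  · by_cases hb : m ≤ b + s
    · exact (hcount hm hb).le
    · simpa only [Q, if_neg hb] using (hRs m (hR' hm hb)).le

theorem prepend_replicate {ℓ : ℕ} (hQ : IsSizeIndexingSperner n a b Q) (hℓ : 1 ≤ ℓ) :
    IsSizeIndexingSperner (n + (a - ℓ)) ℓ b
      (fun m => if m < a then Multiset.replicate m (n + 1 + (m - ℓ)) else Q m) := by
  have hQ' : ∀ {m}, m ∈ Icc ℓ b → ¬ m < a → m ∈ Icc a b := fun hm ha => by
    simp only [Finset.mem_Icc] at hm ⊢; omega
  refine ⟨fun m hm => ?_, fun m hm x hx => ?_, fun m hm m' hm' hlt => ?_⟩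
  · by_cases ha : m < a
    · simp only [if_pos ha, Multiset.card_replicate]
    · simpa only [if_neg ha] using hQ.card_eq m (hQ' hm ha)
  · simp only [Finset.mem_Icc] at hm ⊢
    by_cases ha : m < a
    · simp only [if_pos ha] at hx
      rw [Multiset.eq_of_mem_replicate hx]
      omega
    · simp only [if_neg ha] at hx
      have := Finset.mem_Icc.1 (hQ.mem_Icc m (hQ' (Finset.mem_Icc.2 hm) ha) x hx)
      omega
  · by_cases ha : m < a
    · have hm1 : 1 ≤ m := hℓ.trans (Finset.mem_Icc.1 hm).1
      have hx : n + 1 + (m - ℓ) ∈ Multiset.replicate m (n + 1 + (m - ℓ)) :=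
        Multiset.mem_replicate.2 ⟨by omega, rfl⟩
      simp only [if_pos ha]
      refine fun hle => ?_
      have hx' := Multiset.mem_of_le hle hx
      by_cases ha' : m' < a
      · simp only [if_pos ha', Multiset.mem_replicate] at hx'
        simp only [Finset.mem_Icc] at hm hm'
        omega
      · simp only [if_neg ha'] at hx'
        have := Finset.mem_Icc.1 (hQ.mem_Icc m' (hQ' hm' ha') _ hx')
        omega
    · have ha' : ¬ m' < a := fun h => ha (hlt.trans h)
      simp only [if_neg ha, if_neg ha']
      exact hQ.not_le m (hQ' hm ha) m' (hQ' hm' ha') hlt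

end IsSizeIndexingSperner

theorem exists_isSizeIndexingSperner_iterate {n : ℕ} {F : ℕ → ℕ}
    (H : ∀ β ≥ 2, ∃ P, IsSizeIndexingSperner n β (F β) P) (k β : ℕ) (hβ : 2 ≤ β) :
    ∃ Q, IsSizeIndexingSperner (n + 1) (β + k) (F ((fun x => F x + 2)^[k] β)) Q ∧
      ∀ m ∈ Icc (β + k) (F ((fun x => F x + 2)^[k] β)), Multiset.count (n + 1) (Q m) ≤ k := by
  induction k generalizing β with
  | zero =>
    obtain ⟨P, hP⟩ := H β hβ
    exact ⟨P, hP.mono n.le_succ le_rfl, fun m hm => (hP.count_succ_eq_zero hm).le⟩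
  | succ k ih =>
    obtain ⟨P, hP⟩ := H β hβ
    obtain ⟨R, hR, hRk⟩ := ih (F β + 2) (by omega)
    rw [show F β + 2 + k = F β + (k + 1) + 1 by omega] at hR hRk
    rw [Function.iterate_succ_apply, ← add_assoc]
    exact hP.exists_pad_append hR fun m hm => Nat.lt_succ_of_le (hRk m hm)

theorem A_of_le_one {r : ℕ} (hr : r ≤ 1) (t : ℕ) : A r t = 2 * t := by
  interval_cases r <;> rcases t with _ | _ | t <;> simp [A]

theorem A_add_two_add_one (r s : ℕ) : A (r + 2) (s + 1) = (A (r + 1))^[s] 2 := by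
  induction s with
  | zero => simp [A]
  | succ s ih => rw [Function.iterate_succ_apply', ← ih, A]

theorem monotone_A : ∀ r, Monotone (A r)
  | 0 | 1 => fun x y h => by simp only [A_of_le_one zero_le_one, A_of_le_one le_rfl]; omega
  | r + 2 => monotone_nat_of_le_succ fun
    | 0 => by simp [A]
    | s + 1 => by
      rw [A_add_two_add_one, A_add_two_add_one]
      refine (monotone_A (r + 1)).monotone_iterate_of_le_map ?_ s.le_succ
      simpa [A] using monotone_A (r + 1) one_le_two

theorem exists_isSizeIndexingSperner_A (r a : ℕ) (ha : 2 ≤ a) :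
    ∃ Q, IsSizeIndexingSperner (r + 2) a (A (r + 1) a) Q := by
  induction r generalizing a with
  | zero => exact ⟨_, by simpa only [A_of_le_one le_rfl] using isSizeIndexingSperner_two a⟩
  | succ r ih =>
    obtain ⟨k, rfl⟩ : ∃ k, a = 2 + k := ⟨a - 2, by omega⟩
    obtain ⟨Q, hQ, -⟩ := exists_isSizeIndexingSperner_iterate ih k 2 le_rfl
    refine ⟨Q, hQ.mono le_rfl ?_⟩
    rw [add_comm 2 k, A, A_add_two_add_one]
    exact monotone_A (r + 1)
      ((monotone_A (r + 1)).iterate_le_of_le (fun x => Nat.le_add_right _ 2) k 2)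

/-- **Theorem.** For every `t ≥ 1` there is a `[2, A_t(t)]`-size-indexing Sperner family with
alphabet size at most `2t²`: a family of multisets `Q m` for `2 ≤ m ≤ A_t(t)`, such that `Q m`
has exactly `m` elements, all elements lie in `{1, …, 2t²}`, and no `Q m` is a sub-multiset of
any other `Q m'` with `m ≠ m'`. -/
theorem sperner_up_to_ackermann (t : ℕ) (ht : 1 ≤ t) :
    ∃ Q : ℕ → Multiset ℕ,
      (∀ m ∈ Finset.Icc 2 (A t t),
        (Q m).card = m ∧ ∀ x ∈ Q m, x ∈ Finset.Icc 1 (2 * t ^ 2)) ∧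
      (∀ m ∈ Finset.Icc 2 (A t t), ∀ m' ∈ Finset.Icc 2 (A t t),
        m ≠ m' → ¬ Q m ≤ Q m') := by
  obtain ⟨Q, hQ⟩ := exists_isSizeIndexingSperner_A (t - 1) (max t 2) (le_max_right t 2)
  rw [Nat.sub_add_cancel ht] at hQ
  have hS : IsSizeIndexingSperner (2 * t ^ 2) 2 (A t t) _ :=
    (hQ.prepend_replicate one_le_two).mono
      (by have := Nat.le_self_pow two_ne_zero t; omega) (monotone_A t (le_max_left t 2))
  exact ⟨_, fun m hm => ⟨hS.card_eq m hm, hS.mem_Icc m hm⟩,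
    fun m hm m' hm' => hS.not_le_of_ne hm hm'⟩
end

section
/- There exist a constant c > 0 and a size-indexing Sperner family (Q_m)_{m ∈ ℕ} whose alphabet size grows only as the cube of the inverse-Ackermann function: for every m ∈ ℕ, the multiset Q_m has exactly m elements, every element of Q_m lies in {1, …, ⌈c · α⁻¹(m)³⌉}, and for all m ≠ m' the multiset Q_m is not a sub-multiset of Q_{m'}. -/
/-- The Ackermann function `α(t) = A_t(t)`. -/
def ackFn (t : ℕ) : ℕ := A t t

/-- The inverse-Ackermann function: the smallest `t` such that `n ≤ α(t)`. -/
noncomputable def invAck (n : ℕ) : ℕ := sInf {t | n ≤ ackFn t}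

/-!
For `j ≥ 0` and `a ≥ 1`, the sizes `a, …, A_{j+1}(a)` carry a size-indexed Sperner family on
`j + 2` letters. Two letters `x, y` handle `[a, 2a]` via `x^(2a-s) y^(2(s-a))`. To pass from
`j` to `j + 1`, add a fresh letter `x` and concatenate old-alphabet families on consecutive
blocks of sizes, each block starting just after the previous one ends, so the block ends iterate
`A_{j+1}` and reach `A_{j+2}(a)`. Earlier blocks receive more copies of `x` than later ones,
which rules out containments between blocks. The sizes in `(α(t-1), α(t)]` thus get a family on
`t + 1` letters, placed inside `(t², (t+1)²]`; distinct levels `t` use disjoint alphabets, and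
every letter is at most `(t+1)² ≤ 4t³`.
-/

theorem A_zero_left (t : ℕ) : A 0 t = 2 * t := by
  rcases t with _ | _ | t <;> simp [A]

theorem A_one_left (t : ℕ) : A 1 t = 2 * t := by
  rcases t with _ | _ | t <;> simp [A]

theorem A_one (r : ℕ) : A r 1 = 2 := by
  rcases r with _ | _ | r <;> simp [A]

theorem two_mul_le_A : ∀ r t, 2 * t ≤ A r t
  | _, 0 => by simp
  | r, 1 => by simp [A_one]
  | 0, t + 2 => (A_zero_left _).ge
  | 1, t + 2 => (A_one_left _).ge
  | r + 2, t + 2 => by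
    have h₁ := two_mul_le_A (r + 1) (A (r + 2) (t + 1))
    have h₂ := two_mul_le_A (r + 2) (t + 1)
    rw [A]
    omega

theorem A_monotone (r : ℕ) : Monotone (A r) := by
  refine monotone_nat_of_le_succ fun t => ?_
  rcases r with _ | _ | r
  · simp [A_zero_left]
  · simp [A_one_left]
  · rcases t with _ | t
    · simp [A]
    · rw [A]
      exact (Nat.le_mul_of_pos_left _ two_pos).trans (two_mul_le_A _ _)

theorem A_add_two_succ (r t : ℕ) : A (r + 2) (t + 1) = (A (r + 1))^[t + 1] 1 := by
  induction t with
  | zero => simp [A_one]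
  | succ t ih => rw [A, ih, Function.iterate_succ_apply' _ (t + 1)]

theorem self_le_ackFn (t : ℕ) : t ≤ ackFn t :=
  (Nat.le_mul_of_pos_left _ two_pos).trans (two_mul_le_A t t)

theorem le_ackFn_invAck (m : ℕ) : m ≤ ackFn (invAck m) :=
  Nat.sInf_mem (s := {t | m ≤ ackFn t}) ⟨m, self_le_ackFn m⟩

theorem invAck_mono : Monotone invAck :=
  fun _ _ h => Nat.sInf_le ((le_ackFn_invAck _).trans' h)

theorem one_le_invAck {m : ℕ} (hm : 1 ≤ m) : 1 ≤ invAck m := by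
  by_contra! h
  have := le_ackFn_invAck m
  simp_all [ackFn, A]

theorem mem_Icc_ackFn_invAck {m : ℕ} (hm : 1 ≤ m) :
    m ∈ Set.Icc (ackFn (invAck m - 1) + 1) (ackFn (invAck m - 1 + 1)) := by
  have hpos := one_le_invAck hm
  rw [Nat.sub_add_cancel hpos]
  refine ⟨Nat.succ_le_of_lt (not_le.mp ?_), le_ackFn_invAck m⟩
  exact Nat.notMem_of_lt_sInf (s := {t | m ≤ ackFn t}) (Nat.sub_one_lt_of_lt hpos)

section Sperner

variable {α : Type*}

structure IsSizeIndexedSperner (F : ℕ → Multiset α) (S : Set α) (lo hi : ℕ) : Prop where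
  card_eq : ∀ s ∈ Set.Icc lo hi, (F s).card = s
  mem : ∀ s ∈ Set.Icc lo hi, ∀ x ∈ F s, x ∈ S
  not_le : ∀ s ∈ Set.Icc lo hi, ∀ s' ∈ Set.Icc lo hi, s < s' → ¬ F s ≤ F s'

namespace IsSizeIndexedSperner

variable {F G : ℕ → Multiset α} {S T : Set α} {lo hi lo' hi' : ℕ}

theorem mono (h : IsSizeIndexedSperner F S lo hi) (hST : S ⊆ T) (hlo : lo ≤ lo')
    (hhi : hi' ≤ hi) : IsSizeIndexedSperner F T lo' hi' := by
  have hIcc : Set.Icc lo' hi' ⊆ Set.Icc lo hi := Set.Icc_subset_Icc hlo hhi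
  exact ⟨fun s hs => h.card_eq s (hIcc hs), fun s hs x hx => hST (h.mem s (hIcc hs) x hx),
    fun s hs s' hs' => h.not_le s (hIcc hs) s' (hIcc hs')⟩

theorem exists_pair {x y : α} (hxy : x ≠ y) (m : ℕ) :
    ∃ F, IsSizeIndexedSperner F {x, y} m (2 * m) := by
  classical
  refine ⟨fun s => .replicate (2 * m - s) x + .replicate (2 * (s - m)) y, ⟨?_, ?_, ?_⟩⟩
  · rintro s ⟨hs, hs'⟩
    simp only [Multiset.card_add, Multiset.card_replicate]
    omega
  · intro s _ z hz
    rcases Multiset.mem_add.mp hz with hz | hz <;> simp [Multiset.eq_of_mem_replicate hz]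
  · rintro s - s' ⟨-, hs'⟩ hss' hle
    have hcount := Multiset.count_le_of_le x hle
    simp only [Multiset.count_add, Multiset.count_replicate_self,
      Multiset.count_replicate, hxy.symm, if_false] at hcount
    omega

theorem extend {x : α} (hF : IsSizeIndexedSperner F (insert x S) lo hi)
    (hG : IsSizeIndexedSperner G S (hi + 2) hi') (hx : x ∉ S) :
    IsSizeIndexedSperner (fun s => if s ≤ hi + 1 then x ::ₘ F (s - 1) else G s)
      (insert x S) (lo + 1) hi' := by
  refine ⟨?_, ?_, ?_⟩
  · rintro s ⟨hs, hs'⟩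
    split_ifs with h
    · rw [Multiset.card_cons, hF.card_eq (s - 1) ⟨by omega, by omega⟩]
      omega
    · exact hG.card_eq s ⟨by omega, hs'⟩
  · rintro s ⟨hs, hs'⟩ z hz
    split_ifs at hz with h
    · rcases Multiset.mem_cons.mp hz with rfl | hz
      · exact Set.mem_insert z S
      · exact hF.mem (s - 1) ⟨by omega, by omega⟩ z hz
    · exact Set.mem_insert_of_mem x (hG.mem s ⟨by omega, hs'⟩ z hz)
  · rintro s ⟨hs, -⟩ s' ⟨-, hs'⟩ hss' hle
    split_ifs at hle with h h' h'
    · exact hF.not_le (s - 1) ⟨by omega, by omega⟩ (s' - 1) ⟨by omega, by omega⟩ (by omega)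
        ((Multiset.cons_le_cons_iff x).mp hle)
    · exact hx (hG.mem s' ⟨by omega, hs'⟩ x (Multiset.mem_of_le hle (Multiset.mem_cons_self x _)))
    · omega
    · exact hG.not_le s ⟨by omega, by omega⟩ s' ⟨by omega, hs'⟩ hss' hle

theorem not_le_of_disjoint (hF : IsSizeIndexedSperner F S lo hi)
    (hG : IsSizeIndexedSperner G T lo' hi') (hST : Disjoint S T) {s s' : ℕ}
    (hs : s ∈ Set.Icc lo hi) (hs₀ : s ≠ 0) (hs' : s' ∈ Set.Icc lo' hi') : ¬ F s ≤ G s' := by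
  intro hle
  obtain ⟨x, hx⟩ := Multiset.card_pos_iff_exists_mem.mp (hF.card_eq s hs ▸ Nat.pos_of_ne_zero hs₀)
  exact hST.notMem_of_mem_left (hF.mem s hs x hx) (hG.mem s' hs' x (Multiset.mem_of_le hle hx))

theorem exists_iterate {x : α} {g : ℕ → ℕ} (hg : Monotone g) (hx : x ∉ S)
    (hfam : ∀ b, 1 ≤ b → ∃ F, IsSizeIndexedSperner F S b (g b)) (k : ℕ) :
    ∃ F, IsSizeIndexedSperner F (insert x S) (k + 1) (g^[k + 1] 1) := by
  induction k with
  | zero =>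
    obtain ⟨F, hF⟩ := hfam 1 le_rfl
    exact ⟨F, hF.mono (Set.subset_insert x S) le_rfl le_rfl⟩
  | succ k ih =>
    obtain ⟨F, hF⟩ := ih
    obtain ⟨G, hG⟩ := hfam (g^[k + 1] 1 + 2) (by omega)
    refine ⟨_, (hF.extend hG hx).mono subset_rfl le_rfl ?_⟩
    rw [Function.iterate_succ_apply' _ (k + 1)]
    exact hg (Nat.le_add_right _ 2)

end IsSizeIndexedSperner

end Sperner

open IsSizeIndexedSperner in
theorem exists_isSizeIndexedSperner_A (j o a : ℕ) (ha : 1 ≤ a) :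
    ∃ F, IsSizeIndexedSperner F (Set.Ioc o (o + (j + 2))) a (A (j + 1) a) := by
  induction j generalizing o a with
  | zero =>
    obtain ⟨F, hF⟩ := exists_pair (x := o + 1) (y := o + 2) (by omega) a
    refine ⟨F, hF.mono ?_ le_rfl (A_one_left a).le⟩
    rintro z (rfl | rfl) <;> simp
  | succ j ih =>
    obtain ⟨k, rfl⟩ := Nat.exists_eq_add_of_le' ha
    have hS : insert (o + 1) (Set.Ioc (o + 1) (o + 1 + (j + 2))) =
        Set.Ioc o (o + (j + 1 + 2)) := by
      ext z
      simp only [Set.mem_insert_iff, Set.mem_Ioc]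
      omega
    rw [A_add_two_succ, ← hS]
    exact exists_iterate (A_monotone _) (by simp) (ih (o + 1)) k

theorem exists_isSizeIndexedSperner_ackFn (t : ℕ) :
    ∃ F, IsSizeIndexedSperner F (Set.Ioc ((t + 1) ^ 2) ((t + 2) ^ 2))
      (ackFn t + 1) (ackFn (t + 1)) := by
  obtain ⟨F, hF⟩ := exists_isSizeIndexedSperner_A t ((t + 1) ^ 2) (ackFn t + 1) (by omega)
  refine ⟨F, hF.mono (Set.Ioc_subset_Ioc_right (by nlinarith)) le_rfl ?_⟩
  exact A_monotone _ (by simpa using self_le_ackFn t)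

/-- **Theorem.** There is a `c > 0` and a size-indexing Sperner family `(Q m)_{m ≥ 1}` whose
alphabet size grows only as the cube of the inverse-Ackermann function: `Q m` has exactly `m`
elements, all lying in `{1, …, c · α⁻¹(m)³}`, and for all `m ≠ m'` the multiset `Q m` is not a
sub-multiset of `Q m'`. -/
theorem sperner_size_indexing :
    ∃ c : ℕ, 0 < c ∧
      ∃ Q : ℕ → Multiset ℕ,
        (∀ m, 1 ≤ m → (Q m).card = m ∧ ∀ x ∈ Q m, x ∈ Finset.Icc 1 (c * invAck m ^ 3)) ∧
        (∀ m m', 1 ≤ m → 1 ≤ m' → m ≠ m' → ¬ Q m ≤ Q m') := by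
  choose F hF using exists_isSizeIndexedSperner_ackFn
  refine ⟨4, by norm_num, fun m => F (invAck m - 1) m, fun m hm => ⟨?_, fun x hx => ?_⟩,
    fun m m' hm hm' hne hle => ?_⟩
  · exact (hF _).card_eq m (mem_Icc_ackFn_invAck hm)
  · obtain ⟨hx₁, hx₂⟩ := (hF _).mem m (mem_Icc_ackFn_invAck hm) x hx
    obtain ⟨t, ht⟩ := Nat.exists_eq_add_of_le' (one_le_invAck hm)
    rw [ht, Nat.add_sub_cancel] at hx₂
    have hcube : (t + 2) ^ 2 ≤ 4 * (t + 1) ^ 3 := by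
      nlinarith [Nat.zero_le (t ^ 3), Nat.zero_le (t ^ 2)]
    exact Finset.mem_Icc.mpr ⟨by omega, by rw [ht]; exact hx₂.trans hcube⟩
  have hsize := mem_Icc_ackFn_invAck hm
  have hsize' := mem_Icc_ackFn_invAck hm'
  rcases hne.lt_or_gt with hlt | hlt
  · rcases (invAck_mono hlt.le).eq_or_lt with hlevel | hlevel
    · dsimp only at hle
      rw [hlevel] at hsize hle
      exact (hF _).not_le m hsize m' hsize' hlt hle
    · refine (hF _).not_le_of_disjoint (hF _) (Set.Ioc_disjoint_Ioc_of_le ?_) hsize (by omega)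
        hsize' hle
      have := one_le_invAck hm
      exact Nat.pow_le_pow_left (by omega) 2
  · have hcard := Multiset.card_le_card hle
    rw [(hF _).card_eq m hsize, (hF _).card_eq m' hsize'] at hcard
    omega
end

section
/- For any non-trivial concept class H (i.e., H contains at least two distinct hypotheses), there does not exist a ticketed learning–unlearning scheme for H with constant space complexity: for every pair of fixed constants c_s, c_t ∈ ℕ, there is no pair (Learn, Unlearn), valid for H-realizable datasets of all sizes n, in which the auxiliary information lies in {0,1}^{c_s} and every ticket lies in {0,1}^{c_t}. -/
/-- Empirical loss of hypothesis `h` on dataset `S` (sum of 0-1 losses). -/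
def empLoss {X : Type} (h : X → Bool) (S : List (X × Bool)) : ℕ :=
  (S.map fun z => if h z.1 = z.2 then 0 else 1).sum

/-- A dataset is `H`-realizable if some hypothesis in `H` has zero empirical loss on it. -/
def IsRealizable {X : Type} (H : Set (X → Bool)) (S : List (X × Bool)) : Prop :=
  ∃ h ∈ H, empLoss h S = 0

/-- The set of empirical risk minimizers in `H` on the dataset `S`. -/
def ERM {X : Type} (H : Set (X → Bool)) (S : List (X × Bool)) : Set (X → Bool) :=
  {h | h ∈ H ∧ ∀ g ∈ H, empLoss h S ≤ empLoss g S}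

/-- The surviving dataset `S ∖ S_I`: the examples of `S` at indices outside `I`,
kept in their original order. -/
def surviving {Z : Type} (S : List Z) (I : Finset (Fin S.length)) : List Z :=
  ((List.finRange S.length).filter fun i => decide (i ∉ I)).map S.get

/-- The unlearning request together with its tickets: the multiset of (example, ticket)
pairs over the indices in `I`. -/
def removedPairs {Z T : Type} (S : List Z) (tk : Fin S.length → T)
    (I : Finset (Fin S.length)) : Multiset (Z × T) :=
  I.val.map fun i => (S.get i, tk i)

/-!
Feed the scheme the datasets `Sₙ = [z, …, z]` (`n` copies of one example `z = (x, b)`).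
The state it keeps about `Sₙ` is an auxiliary string from a finite set together with the
multiset of the `n` tickets, a multiset over a finite set. By Dickson's lemma there are `m < n`
with the same auxiliary string and the tickets of `Sₘ` contained in those of `Sₙ`. Unlearning
from `Sₙ` the `m` copies of `z` carrying exactly the tickets of `Sₘ` is then the same request
as unlearning all of `Sₘ`, so `Learn` gives the same hypothesis on `S_{n-m}` as on `[]`.
Choosing `b` opposite to the value at `x` of the hypothesis learnt on `[]` (possible since `H`
is non-trivial), this contradicts that ERM must fit the realizable nonempty dataset `S_{n-m}`.
-/

open List

theorem Multiset.exists_le_map_eq {α β : Type*} {f : α → β} {s : Multiset β} {t : Multiset α}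
    (h : s ≤ t.map f) : ∃ u ≤ t, u.map f = s := by
  induction s using Quotient.inductionOn
  induction t using Quotient.inductionOn
  obtain ⟨l, hperm, hsub⟩ := h
  obtain ⟨l', hl', rfl⟩ := List.sublist_map_iff.mp hsub
  exact ⟨l', hl'.subperm, Quot.sound hperm⟩

instance Multiset.wellQuasiOrderedLE {α : Type*} [Finite α] :
    WellQuasiOrderedLE (Multiset α) := by
  classical
  exact Finsupp.orderIsoMultiset.wellQuasiOrderedLE_iff.mp inferInstance

theorem Multiset.exists_lt_le_and_eq {α A : Type*} [Finite α] [Finite A]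
    (μ : ℕ → Multiset α) (a : ℕ → A) : ∃ m n, m < n ∧ μ m ≤ μ n ∧ a m = a n :=
  wellQuasiOrdered_le.prod (Finite.wellQuasiOrdered _) fun n => (μ n, a n)

theorem empLoss_eq_zero_iff {X : Type} {h : X → Bool} {S : List (X × Bool)} :
    empLoss h S = 0 ↔ ∀ z ∈ S, h z.1 = z.2 := by
  simp only [empLoss, List.sum_eq_zero_iff, List.mem_map, forall_exists_index, and_imp,
    forall_apply_eq_imp_iff₂, ite_eq_left_iff, one_ne_zero, imp_false, not_not]

theorem empLoss_eq_zero_of_mem_ERM {X : Type} {H : Set (X → Bool)} {S : List (X × Bool)}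
    {h : X → Bool} (hS : IsRealizable H S) (hh : h ∈ ERM H S) : empLoss h S = 0 := by
  obtain ⟨g, hg, hg0⟩ := hS
  exact Nat.eq_zero_of_le_zero (hg0 ▸ hh.2 g hg)

theorem isRealizable_replicate {X : Type} {H : Set (X → Bool)} {h : X → Bool} (hH : h ∈ H)
    {x : X} {b : Bool} (hx : h x = b) (n : ℕ) : IsRealizable H (replicate n (x, b)) :=
  ⟨h, hH, empLoss_eq_zero_iff.mpr fun _ hz => (eq_of_mem_replicate hz).symm ▸ hx⟩

theorem apply_eq_of_mem_ERM_replicate {X : Type} {H : Set (X → Bool)} {h : X → Bool}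
    {x : X} {b : Bool} {n : ℕ} (hreal : IsRealizable H (replicate n (x, b)))
    (hh : h ∈ ERM H (replicate n (x, b))) (hn : 0 < n) : h x = b :=
  empLoss_eq_zero_iff.mp (empLoss_eq_zero_of_mem_ERM hreal hh) (x, b)
    (mem_replicate.mpr ⟨hn.ne', rfl⟩)

section Unlearning

variable {Z T : Type}

theorem length_surviving (S : List Z) (I : Finset (Fin S.length)) :
    (surviving S I).length = S.length - I.card := by
  have hnodup := (nodup_finRange S.length).filter fun i => decide (i ∉ I)
  rw [surviving, length_map, ← toFinset_card_of_nodup hnodup, toFinset_filter,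
    toFinset_finRange]
  simp [Finset.filter_not, Finset.card_sdiff]

theorem surviving_univ (S : List Z) : surviving S Finset.univ = [] := by
  simp [surviving]

theorem surviving_replicate (n : ℕ) (z : Z) (I : Finset (Fin (replicate n z).length)) :
    surviving (replicate n z) I = replicate (n - I.card) z := by
  refine eq_replicate_iff.mpr ⟨by simp [length_surviving], fun y hy => ?_⟩
  obtain ⟨i, -, rfl⟩ := List.mem_map.mp hy
  simp

theorem removedPairs_replicate (n : ℕ) (z : Z) (tk : Fin (replicate n z).length → T)
    (I : Finset (Fin (replicate n z).length)) :
    removedPairs (replicate n z) tk I = (I.val.map tk).map (z, ·) := by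
  simp [removedPairs, Multiset.map_map]

end Unlearning

theorem exists_learn_replicate_eq_learn_nil {Z Hyp A T : Type} [Finite A] [Finite T]
    (Learn : (S : List Z) → Hyp × A × (Fin S.length → T))
    (Unlearn : Multiset (Z × T) → A → Hyp) (z : Z)
    (hU : ∀ n (I : Finset (Fin (replicate n z).length)),
      Unlearn (removedPairs (replicate n z) (Learn (replicate n z)).2.2 I)
        (Learn (replicate n z)).2.1 = (Learn (surviving (replicate n z) I)).1) :
    ∃ k, 0 < k ∧ (Learn (replicate k z)).1 = (Learn []).1 := by
  let tickets n : Multiset T :=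
    (Finset.univ : Finset (Fin (replicate n z).length)).val.map (Learn (replicate n z)).2.2
  obtain ⟨m, n, hmn, hle, haux⟩ :=
    Multiset.exists_lt_le_and_eq tickets fun n => (Learn (replicate n z)).2.1
  obtain ⟨u, hu, hmap⟩ := Multiset.exists_le_map_eq hle
  let I : Finset (Fin (replicate n z).length) := ⟨u, Multiset.nodup_of_le hu Finset.univ.nodup⟩
  have hI : Multiset.card u = m := by
    simpa [tickets] using congrArg Multiset.card hmap
  refine ⟨n - m, by omega, ?_⟩
  calc (Learn (replicate (n - m) z)).1
      = (Learn (surviving (replicate n z) I)).1 := by rw [surviving_replicate, Finset.card_mk, hI]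
    _ = Unlearn (removedPairs (replicate m z) (Learn (replicate m z)).2.2 Finset.univ)
          (Learn (replicate m z)).2.1 := by
        rw [← hU n I, removedPairs_replicate, removedPairs_replicate, ← haux]
        exact congrArg₂ _ (congrArg _ hmap) rfl
    _ = (Learn []).1 := by rw [hU, surviving_univ]

theorem no_constant_space_tilu_general {X : Type}
    (H : Set (X → Bool)) (h₁ h₂ : X → Bool)
    (h₁H : h₁ ∈ H) (h₂H : h₂ ∈ H) (hne : h₁ ≠ h₂)
    (cs ct : ℕ) :
    ¬ ∃ (Learn : (S : List (X × Bool)) →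
          (X → Bool) × (Fin cs → Bool) × (Fin S.length → Fin ct → Bool))
        (Unlearn : Multiset ((X × Bool) × (Fin ct → Bool)) → (Fin cs → Bool) → (X → Bool)),
        (∀ S, IsRealizable H S → (Learn S).1 ∈ ERM H S) ∧
        (∀ S, IsRealizable H S → ∀ I : Finset (Fin S.length),
          Unlearn (removedPairs S (Learn S).2.2 I) (Learn S).2.1 =
            (Learn (surviving S I)).1) := by
  rintro ⟨Learn, Unlearn, hERM, hU⟩
  obtain ⟨x, hx⟩ := Function.ne_iff.mp hne
  set b := !(Learn []).1 x
  obtain ⟨h, hH, hxb⟩ : ∃ h ∈ H, h x = b := by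
    by_cases h₁x : h₁ x = b
    · exact ⟨h₁, h₁H, h₁x⟩
    · exact ⟨h₂, h₂H, by revert hx h₁x; cases h₁ x <;> cases h₂ x <;> cases b <;> simp⟩
  have hreal := isRealizable_replicate hH hxb
  obtain ⟨k, hk, hforget⟩ :=
    exists_learn_replicate_eq_learn_nil Learn Unlearn (x, b) fun n => hU _ (hreal n)
  have hfit := apply_eq_of_mem_ERM_replicate (hreal k) (hERM _ (hreal k)) hk
  rw [hforget] at hfit
  exact (Bool.eq_not_self _).mp hfit

/-- **Theorem (no constant-space TiLU scheme for any non-trivial class).** Let `H` be a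
non-trivial concept class (it contains two distinct hypotheses `h₁ ≠ h₂`). Then for every
pair of fixed constants `c_s, c_t`, there is no ticketed learning–unlearning scheme
`(Learn, Unlearn)` for `H`, valid for `H`-realizable datasets of all sizes, whose auxiliary
information lies in `{0,1}^{c_s}` and whose tickets lie in `{0,1}^{c_t}`. -/
theorem no_constant_space_tilu {X : Type} [Fintype X] [DecidableEq X]
    (H : Set (X → Bool)) (h₁ h₂ : X → Bool)
    (h₁H : h₁ ∈ H) (h₂H : h₂ ∈ H) (hne : h₁ ≠ h₂)
    (cs ct : ℕ) :
    ¬ ∃ (Learn : (S : List (X × Bool)) →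
          (X → Bool) × (Fin cs → Bool) × (Fin S.length → Fin ct → Bool))
        (Unlearn : Multiset ((X × Bool) × (Fin ct → Bool)) → (Fin cs → Bool) → (X → Bool)),
        (∀ S, IsRealizable H S → (Learn S).1 ∈ ERM H S) ∧
        (∀ S, IsRealizable H S → ∀ I : Finset (Fin S.length),
          Unlearn (removedPairs S (Learn S).2.2 I) (Learn S).2.1 =
            (Learn (surviving S I)).1) :=
  no_constant_space_tilu_general H h₁ h₂ h₁H h₂H hne cs ct
end

section
/- Any (central, non-ticketed) learning–unlearning scheme for the class H_thresh of one-dimensional threshold functions that is required to be valid for all (including non-realizable) datasets must have space complexity Ω(min{n, |X|}): for every m ∈ ℕ, if |X| ≥ 4m + 4 and the scheme is valid for all datasets of size 4m over X, then its auxiliary information must contain at least m bits. -/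
/-- The unlearning request `S_I`: the examples of `S` at indices in `I`,
in their original order. -/
def removedList {Z : Type} (S : List Z) (I : Finset (Fin S.length)) : List Z :=
  ((List.finRange S.length).filter fun i => decide (i ∈ I)).map S.get

/-- The threshold function `h_{>a}(x) = 1{x > a}` on the domain `{1, …, N}`, represented on
`Fin N` (where `x : Fin N` stands for the domain point `x + 1`): `h_{>a} x = 1{a ≤ x}`. -/
def thrFn (N : ℕ) (a : ℕ) : Fin N → Bool := fun x => decide (a ≤ (x : ℕ))

/-- The class of one-dimensional threshold functions over `{1, …, N}`,
indexed by `a ∈ {0, 1, …, N}`. -/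
def Hthr (N : ℕ) : Set (Fin N → Bool) := {h | ∃ a ≤ N, h = thrFn N a}

theorem List.map_filter_finRange_cast {Z : Type} {k n : ℕ} (h : k = n) (q : Fin n → Bool)
    (g : Fin n → Z) :
    ((List.finRange k).filter fun i => q (i.cast h)).map (fun i => g (i.cast h)) =
      ((List.finRange n).filter q).map g := by
  subst h; rfl

theorem List.map_get_filter_finRange_ofFn {Z : Type} {n : ℕ} (f : Fin n → Z) (q : Fin n → Bool) :
    ((List.finRange (List.ofFn f).length).filter fun i => q (i.cast List.length_ofFn)).map
      (List.ofFn f).get = ((List.finRange n).filter q).map f := by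
  rw [funext (List.get_ofFn f)]
  exact List.map_filter_finRange_cast _ q f

theorem removedList_ofFn {Z : Type} {n : ℕ} (f : Fin n → Z) (p : Fin n → Prop) [DecidablePred p] :
    removedList (List.ofFn f) {i | p (i.cast List.length_ofFn)} =
      ((List.finRange n).filter (p ·)).map f := by
  simp only [removedList, Finset.mem_filter_univ]
  exact List.map_get_filter_finRange_ofFn f (p ·)

theorem surviving_ofFn {Z : Type} {n : ℕ} (f : Fin n → Z) (p : Fin n → Prop) [DecidablePred p] :
    surviving (List.ofFn f) {i | p (i.cast List.length_ofFn)} =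
      ((List.finRange n).filter (¬ p ·)).map f := by
  simp only [surviving, Finset.mem_filter_univ]
  exact List.map_get_filter_finRange_ofFn f (¬ p ·)

section FlipLabels

variable {X : Type}

def flipLabels (S : List (X × Bool)) : List (X × Bool) :=
  S.map fun z => (z.1, !z.2)

theorem length_flipLabels (S : List (X × Bool)) : (flipLabels S).length = S.length :=
  List.length_map _

theorem empLoss_add_empLoss_flipLabels (g₁ g₂ : X → Bool) (S : List (X × Bool)) :
    empLoss g₁ S + empLoss g₂ (flipLabels S) =
      (S.map fun z => (if g₁ z.1 = z.2 then 0 else 1) + if g₂ z.1 = !z.2 then 0 else 1).sum := by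
  rw [List.sum_map_add, empLoss, empLoss, flipLabels, List.map_map]
  rfl

theorem empLoss_add_empLoss_flipLabels_self (h : X → Bool) (S : List (X × Bool)) :
    empLoss h S + empLoss h (flipLabels S) = S.length := by
  rw [empLoss_add_empLoss_flipLabels]
  have hone : ∀ z : X × Bool,
      ((if h z.1 = z.2 then 0 else 1) + if h z.1 = !z.2 then 0 else 1) = 1 := by
    intro z; cases h z.1 <;> cases z.2 <;> rfl
  simp only [hone, List.map_const', List.sum_replicate, smul_eq_mul, mul_one]

theorem empLoss_add_empLoss_flipLabels_lt {ι : Type} {K : List ι} (x : ι → X) (β : ι → Bool)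
    {g₁ g₂ : X → Bool} {j : ι} (hj : j ∈ K) (hfit : g₁ (x j) = β j) (hsep : g₂ (x j) ≠ g₁ (x j))
    (hagree : ∀ k ≠ j, g₁ (x k) = g₂ (x k)) :
    empLoss g₁ (K.map fun k => (x k, β k)) + empLoss g₂ (flipLabels (K.map fun k => (x k, β k))) <
      K.length := by
  rw [← List.length_map (fun k => (x k, β k)), ← empLoss_add_empLoss_flipLabels_self g₁,
    empLoss_add_empLoss_flipLabels, empLoss_add_empLoss_flipLabels, List.map_map, List.map_map]
  refine List.sum_lt_sum _ _ (fun k _ => ?_) ⟨j, hj, ?_⟩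
  · by_cases hk : k = j
    · subst hk
      simp only [Function.comp_apply, hfit, Bool.eq_not_iff.mpr hsep]
      cases β k <;> decide
    · simp only [Function.comp_apply, hagree k hk, le_refl]
  · simp only [Function.comp_apply, hfit, Bool.eq_not_iff.mpr hsep]
    cases β j <;> decide

theorem length_le_of_mem_ERM_flipLabels {H : Set (X → Bool)} {S : List (X × Bool)}
    {h g₁ g₂ : X → Bool} (hS : h ∈ ERM H S) (hS' : h ∈ ERM H (flipLabels S)) (hg₁ : g₁ ∈ H)
    (hg₂ : g₂ ∈ H) : S.length ≤ empLoss g₁ S + empLoss g₂ (flipLabels S) :=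
  empLoss_add_empLoss_flipLabels_self h S ▸ add_le_add (hS.2 g₁ hg₁) (hS'.2 g₂ hg₂)

end FlipLabels

theorem thrFn_succ_apply_self {N : ℕ} (x : Fin N) : thrFn N ((x : ℕ) + 1) x ≠ thrFn N x x := by
  simp [thrFn]

theorem thrFn_succ_apply_of_ne {N a : ℕ} {x : Fin N} (hx : (x : ℕ) ≠ a) :
    thrFn N a x = thrFn N (a + 1) x := by
  simp only [thrFn, decide_eq_decide]
  omega

def FlipsEachPoint {X : Type} {m : ℕ} (H : Set (X → Bool)) (x : Fin m → X) : Prop :=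
  ∀ j, ∃ g₁ ∈ H, ∃ g₂ ∈ H, g₂ (x j) ≠ g₁ (x j) ∧ ∀ k ≠ j, g₁ (x k) = g₂ (x k)

theorem FlipsEachPoint.exists_apply_eq {X : Type} {m : ℕ} {H : Set (X → Bool)} {x : Fin m → X}
    (hH : FlipsEachPoint H x) (j : Fin m) (b : Bool) :
    ∃ g₁ ∈ H, ∃ g₂ ∈ H, g₁ (x j) = b ∧ g₂ (x j) ≠ g₁ (x j) ∧ ∀ k ≠ j, g₁ (x k) = g₂ (x k) := by
  obtain ⟨g₁, hg₁, g₂, hg₂, hne, hagree⟩ := hH j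
  by_cases hb : g₁ (x j) = b
  · exact ⟨g₁, hg₁, g₂, hg₂, hb, hne, hagree⟩
  · refine ⟨g₂, hg₂, g₁, hg₁, ?_, hne.symm, fun k hk => (hagree k hk).symm⟩
    rw [Bool.eq_not_iff.mpr hne, Bool.eq_not_iff.mpr hb, Bool.not_not]

theorem thresholds_flipsEachPoint {N m : ℕ} (h : m ≤ N) : FlipsEachPoint (Hthr N) (Fin.castLE h) :=
  fun j => ⟨thrFn N j, ⟨j, by omega, rfl⟩, thrFn N (j + 1), ⟨j + 1, by omega, rfl⟩,
    thrFn_succ_apply_self _, fun _ hk => thrFn_succ_apply_of_ne (Fin.val_ne_of_ne hk)⟩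

def IsLUScheme {X : Type} (H : Set (X → Bool)) (n cs : ℕ)
    (Learn : List (X × Bool) → (X → Bool) × (Fin cs → Bool))
    (Unlearn : List (X × Bool) → (Fin cs → Bool) → (X → Bool)) : Prop :=
  ∀ S : List (X × Bool), S.length ≤ n →
    (Learn S).1 ∈ ERM H S ∧
    ∀ I : Finset (Fin S.length), Unlearn (removedList S I) (Learn S).2 = (Learn (surviving S I)).1

section LowerBound

variable {X : Type} {H : Set (X → Bool)} {n cs m : ℕ}
  {Learn : List (X × Bool) → (X → Bool) × (Fin cs → Bool)}
  {Unlearn : List (X × Bool) → (Fin cs → Bool) → (X → Bool)}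

theorem IsLUScheme.learn_eq_of_aux_eq (hL : IsLUScheme H n cs Learn Unlearn)
    {S S' : List (X × Bool)} (hS : S.length ≤ n) (hS' : S'.length ≤ n)
    (I : Finset (Fin S.length)) (I' : Finset (Fin S'.length))
    (hrem : removedList S I = removedList S' I') (haux : (Learn S).2 = (Learn S').2) :
    (Learn (surviving S I)).1 = (Learn (surviving S' I')).1 := by
  rw [← (hL S hS).2, ← (hL S' hS').2, hrem, haux]

theorem IsLUScheme.learn_eq_learn_flipLabels (hL : IsLUScheme H n cs Learn Unlearn)
    (hmn : m ≤ n) (x : Fin m → X) {β β' : Fin m → Bool}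
    (haux :
      (Learn (List.ofFn fun k => (x k, β k))).2 = (Learn (List.ofFn fun k => (x k, β' k))).2) :
    (Learn (((List.finRange m).filter fun k => ¬ β k = β' k).map fun k => (x k, β k))).1 =
      (Learn (flipLabels
        (((List.finRange m).filter fun k => ¬ β k = β' k).map fun k => (x k, β k)))).1 := by
  have hflip : ((List.finRange m).filter fun k => ¬ β k = β' k).map (fun k => (x k, β' k)) =
      flipLabels (((List.finRange m).filter fun k => ¬ β k = β' k).map fun k => (x k, β k)) := by
    rw [flipLabels, List.map_map]
    refine List.map_congr_left fun k hk => ?_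
    have hk' : β k ≠ β' k := by simpa using hk
    exact Prod.ext rfl (Bool.eq_not_iff.mpr hk'.symm)
  rw [← hflip, ← surviving_ofFn _ fun k => β k = β' k, ← surviving_ofFn _ fun k => β k = β' k]
  refine hL.learn_eq_of_aux_eq (by simpa using hmn) (by simpa using hmn) _ _ ?_ haux
  rw [removedList_ofFn _ fun k => β k = β' k, removedList_ofFn _ fun k => β k = β' k]
  exact List.map_congr_left fun k hk => by rw [of_decide_eq_true (List.mem_filter.mp hk).2]

theorem IsLUScheme.aux_injective (hL : IsLUScheme H n cs Learn Unlearn) (hmn : m ≤ n)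
    {x : Fin m → X} (hH : FlipsEachPoint H x) :
    Function.Injective fun β : Fin m → Bool => (Learn (List.ofFn fun k => (x k, β k))).2 := by
  intro β β' haux
  by_contra hne
  obtain ⟨j, hj⟩ := Function.ne_iff.mp hne
  have hlearn := hL.learn_eq_learn_flipLabels hmn x haux
  set K := (List.finRange m).filter fun k => ¬ β k = β' k
  have hjK : j ∈ K := List.mem_filter.mpr ⟨List.mem_finRange j, decide_eq_true hj⟩
  have hlen : (K.map fun k => (x k, β k)).length ≤ n := by
    rw [List.length_map]
    exact (List.length_filter_le _ _).trans (by simpa using hmn)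
  have hERM := (hL _ hlen).1
  have hERM' := (hL _ ((length_flipLabels _).trans_le hlen)).1
  rw [← hlearn] at hERM'
  obtain ⟨g₁, hg₁, g₂, hg₂, hfit, hsep, hagree⟩ := hH.exists_apply_eq j (β j)
  exact (length_le_of_mem_ERM_flipLabels hERM hERM' hg₁ hg₂).not_gt
    ((List.length_map _).symm ▸ empLoss_add_empLoss_flipLabels_lt x β hjK hfit hsep hagree)

theorem IsLUScheme.le_of_flipsEachPoint (hL : IsLUScheme H n cs Learn Unlearn) (hmn : m ≤ n)
    {x : Fin m → X} (hH : FlipsEachPoint H x) : m ≤ cs := by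
  have hcard := Fintype.card_le_of_injective _ (hL.aux_injective hmn hH)
  simp only [Fintype.card_fun, Fintype.card_bool, Fintype.card_fin] at hcard
  exact (Nat.pow_le_pow_iff_right one_lt_two).mp hcard

end LowerBound

/-- **Theorem (agnostic central lower bound for 1D thresholds).** Any central
(non-ticketed) learning–unlearning scheme for the class of 1D thresholds that is valid for
all — including non-realizable — datasets of size (at most) `4m`, over a domain of size
`N ≥ 4m + 4`, must have auxiliary information of at least `m` bits. -/
theorem thresholds_agnostic_central_lb (m N cs : ℕ) (hN : 4 * m + 4 ≤ N)
    (hscheme :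
      ∃ (Learn : List (Fin N × Bool) → (Fin N → Bool) × (Fin cs → Bool))
        (Unlearn : List (Fin N × Bool) → (Fin cs → Bool) → (Fin N → Bool)),
        ∀ S : List (Fin N × Bool), S.length ≤ 4 * m →
          (Learn S).1 ∈ ERM (Hthr N) S ∧
          ∀ I : Finset (Fin S.length),
            Unlearn (removedList S I) (Learn S).2 = (Learn (surviving S I)).1) :
    m ≤ cs := by
  obtain ⟨Learn, Unlearn, hL⟩ := hscheme
  exact IsLUScheme.le_of_flipsEachPoint hL (by omega)
    (thresholds_flipsEachPoint (by omega : m ≤ N))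
end
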